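/- Let c > 0, 0 < H < 1 and K > 4c/(1-H)². Then for every real constant h, the function s ↦ 1 - h - s/K - c·s/(1+s²) (which equals f_h(s)/s) is strictly decreasing on the interval [K(1-H)/2, ∞); in particular, if K(1-H)/2 ≤ y < x then f_h(x)/x < f_h(y)/y. -/
import Mathlib


/-- The reaction term of the logistic-growth-with-grazing model with
constant harvesting rate `h`: `f_h(s) = s - s²/K - c·s²/(1+s²) - h·s`. -/
noncomputable def fGraze (K c h s : ℝ) : ℝ :=
  s - s ^ 2 / K - c * s ^ 2 / (1 + s ^ 2) - h * s

/-- For `c > 0`, `0 < H < 1` and `K > 4c/(1-H)²`, for every real `h` the map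
`s ↦ 1 - h - s/K - c·s/(1+s²)` (which equals `f_h(s)/s`) is strictly decreasing
on `[K(1-H)/2, ∞)`; in particular if `K(1-H)/2 ≤ y < x` then
`f_h(x)/x < f_h(y)/y`. -/
theorem fGraze_div_strictAntiOn (c H K : ℝ) (hc : 0 < c) (hH₀ : 0 < H) (hH₁ : H < 1)
    (hK : 4 * c / (1 - H) ^ 2 < K) (h : ℝ) :
    StrictAntiOn (fun s : ℝ => 1 - h - s / K - c * s / (1 + s ^ 2))
      (Set.Ici (K * (1 - H) / 2)) ∧
    (∀ x y : ℝ, K * (1 - H) / 2 ≤ y → y < x →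
      fGraze K c h x / x < fGraze K c h y / y) := by
  have hH : 0 < (1 - H) ^ 2 := pow_pos (by linarith) 2
  have hK0 : 0 < K := lt_trans (div_pos (by linarith) hH) hK
  have hca : K * c < (K * (1 - H) / 2) ^ 2 := by
    have h4c : 4 * c < K * (1 - H) ^ 2 := by
      rw [div_lt_iff₀ hH] at hK; linarith
    nlinarith
  have ha : 0 < K * (1 - H) / 2 := by nlinarith
  have key : ∀ x y : ℝ, K * (1 - H) / 2 ≤ y → y < x →
      (1 - h - x / K - c * x / (1 + x ^ 2)) < (1 - h - y / K - c * y / (1 + y ^ 2)) := by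
    intro x y hy hyx
    have hy0 : 0 < y := lt_of_lt_of_le ha hy
    have hx0 : 0 < x := lt_trans hy0 hyx
    have hdy : (0:ℝ) < 1 + y ^ 2 := by positivity
    have hdx : (0:ℝ) < 1 + x ^ 2 := by positivity
    have hxy : K * c < x * y := by nlinarith
    have hbr : 0 < (1 + x ^ 2) * (1 + y ^ 2) + K * c * (1 - x * y) := by
      nlinarith [sq_nonneg (x - y), mul_pos hx0 hy0,
        mul_lt_mul_of_pos_right hxy (mul_pos hx0 hy0)]
    have hEq : (1 - h - y / K - c * y / (1 + y ^ 2)) - (1 - h - x / K - c * x / (1 + x ^ 2))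
        = (x - y) * ((1 + x ^ 2) * (1 + y ^ 2) + K * c * (1 - x * y))
          / (K * ((1 + x ^ 2) * (1 + y ^ 2))) := by
      field_simp
      ring
    have hpos : 0 < (x - y) * ((1 + x ^ 2) * (1 + y ^ 2) + K * c * (1 - x * y))
        / (K * ((1 + x ^ 2) * (1 + y ^ 2))) := by
      apply div_pos (mul_pos (by linarith) hbr) (by positivity)
    linarith [hEq ▸ hpos]
  constructor
  · intro y hy x hx hyx
    exact key x y hy hyx
  · intro x y hy hyx
    have hy0 : 0 < y := lt_of_lt_of_le ha hy
    have hx0 : 0 < x := lt_trans hy0 hyx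
    have hg : ∀ s : ℝ, 0 < s → fGraze K c h s / s = 1 - h - s / K - c * s / (1 + s ^ 2) := by
      intro s hs
      have hds : (0:ℝ) < 1 + s ^ 2 := by positivity
      unfold fGraze
      field_simp
      ring
    rw [hg x hx0, hg y hy0]
    exact key x y hy hyx
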